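/- arXiv:1803.10068 — 4 statements merged into one kernel-verified Lean document; each statement's English description precedes it below -/
import Mathlib

section
/- For all complex numbers z1, z2 and every ε ≥ 0, defining f_ε(z) = z·ln(ε + |z|), one has |Im((f_ε(z1) − f_ε(z2))·(conj(z1) − conj(z2)))| ≤ |z1 − z2|². -/
/-!
Write `f z = z * φ(‖z‖)` with `φ` real. Then
`Im((f z₁ - f z₂)(z̄₁ - z̄₂)) = (φ(‖z₂‖) - φ(‖z₁‖)) · Im(z₁ z̄₂)`, and `Im(z₁ z̄₂)` is bounded by
`min ‖z₁‖ ‖z₂‖ · ‖z₁ - z₂‖`. For `φ(r) = log (ε + r)` the concavity bound `log x ≤ x - 1` gives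
`min r s · |φ r - φ s| ≤ |r - s|`, and `|‖z₁‖ - ‖z₂‖| ≤ ‖z₁ - z₂‖` finishes the estimate.
-/

open Complex ComplexConjugate

lemma im_mul_ofReal_sub_mul_conj_sub (z₁ z₂ : ℂ) (a b : ℝ) :
    ((z₁ * a - z₂ * b) * (conj z₁ - conj z₂)).im = (b - a) * (z₁ * conj z₂).im := by
  simp only [mul_im, mul_re, sub_re, sub_im, conj_re, conj_im, ofReal_re, ofReal_im]
  ring

lemma abs_im_mul_conj_le_norm_mul_norm_sub (z₁ z₂ : ℂ) :
    |(z₁ * conj z₂).im| ≤ ‖z₂‖ * ‖z₁ - z₂‖ := by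
  have h : (z₁ * conj z₂).im = ((z₁ - z₂) * conj z₂).im := by
    rw [sub_mul, sub_im, mul_conj, ofReal_im, sub_zero]
  rw [h, mul_comm ‖z₂‖, ← Complex.norm_conj z₂, ← norm_mul]
  exact abs_im_le_norm _

lemma abs_im_mul_conj_le_min_mul_norm_sub (z₁ z₂ : ℂ) :
    |(z₁ * conj z₂).im| ≤ min ‖z₁‖ ‖z₂‖ * ‖z₁ - z₂‖ := by
  have h₁ := abs_im_mul_conj_le_norm_mul_norm_sub z₂ z₁
  rw [← conj_conj (z₂ * conj z₁), conj_im, abs_neg, map_mul, conj_conj, mul_comm,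
    norm_sub_rev] at h₁
  rw [min_mul_of_nonneg _ _ (norm_nonneg _)]
  exact le_min h₁ (abs_im_mul_conj_le_norm_mul_norm_sub z₁ z₂)

lemma mul_abs_log_add_sub_log_add_le {ε r s : ℝ} (hε : 0 ≤ ε) (hs : 0 ≤ s) (hsr : s ≤ r) :
    s * |Real.log (ε + r) - Real.log (ε + s)| ≤ r - s := by
  rcases hs.eq_or_lt with rfl | hs
  · simpa using hsr
  have hεs : 0 < ε + s := by linarith
  have hεr : 0 < ε + r := by linarith
  have hdiv : Real.log (ε + r) - Real.log (ε + s) = Real.log ((ε + r) / (ε + s)) :=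
    (Real.log_div hεr.ne' hεs.ne').symm
  rw [hdiv, abs_of_nonneg (Real.log_nonneg ((one_le_div hεs).2 (by linarith)))]
  calc s * Real.log ((ε + r) / (ε + s))
      ≤ s * ((ε + r) / (ε + s) - 1) :=
        mul_le_mul_of_nonneg_left (Real.log_le_sub_one_of_pos (div_pos hεr hεs)) hs.le
    _ = s / (ε + s) * (r - s) := by field_simp; ring
    _ ≤ 1 * (r - s) :=
        mul_le_mul_of_nonneg_right ((div_le_one hεs).2 (by linarith)) (by linarith)
    _ = r - s := one_mul _

lemma min_mul_abs_log_add_sub_log_add_le {ε r s : ℝ} (hε : 0 ≤ ε) (hr : 0 ≤ r) (hs : 0 ≤ s) :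
    min r s * |Real.log (ε + r) - Real.log (ε + s)| ≤ |r - s| := by
  rcases le_total s r with hsr | hrs
  · rw [min_eq_right hsr, abs_of_nonneg (sub_nonneg.2 hsr)]
    exact mul_abs_log_add_sub_log_add_le hε hs hsr
  · rw [min_eq_left hrs, abs_sub_comm, abs_sub_comm r, abs_of_nonneg (sub_nonneg.2 hrs)]
    exact mul_abs_log_add_sub_log_add_le hε hr hrs

theorem stmt_0 (ε : ℝ) (hε : 0 ≤ ε) (z1 z2 : ℂ)
    (f : ℂ → ℂ) (hf : ∀ z : ℂ, f z = z * (Real.log (ε + ‖z‖) : ℂ)) :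
    |((f z1 - f z2) * ((starRingEnd ℂ) z1 - (starRingEnd ℂ) z2)).im| ≤
      (‖z1 - z2‖)^2 := by
  rw [hf, hf, im_mul_ofReal_sub_mul_conj_sub, abs_mul]
  calc |Real.log (ε + ‖z2‖) - Real.log (ε + ‖z1‖)| * |(z1 * conj z2).im|
      ≤ |Real.log (ε + ‖z1‖) - Real.log (ε + ‖z2‖)| * (min ‖z1‖ ‖z2‖ * ‖z1 - z2‖) := by
        rw [abs_sub_comm]
        exact mul_le_mul_of_nonneg_left (abs_im_mul_conj_le_min_mul_norm_sub z1 z2)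
          (abs_nonneg _)
    _ = min ‖z1‖ ‖z2‖ * |Real.log (ε + ‖z1‖) - Real.log (ε + ‖z2‖)| * ‖z1 - z2‖ := by ring
    _ ≤ |‖z1‖ - ‖z2‖| * ‖z1 - z2‖ := by
        gcongr
        exact min_mul_abs_log_add_sub_log_add_le hε (norm_nonneg _) (norm_nonneg _)
    _ ≤ ‖z1 - z2‖ ^ 2 := by
        rw [sq]
        gcongr
        exact abs_norm_sub_norm_le z1 z2
end

section
/- Let Ω ⊆ ℝ^d with finite measure, λ ∈ ℝ, ε > 0, and u₀ ∈ L¹(Ω) ∩ L²(Ω). Then |E^ε(u₀) − E(u₀)| ≤ 4ε|λ|·‖u₀‖_{L¹(Ω)}, where E(u₀) = ∫_Ω [|∇u₀|² + λ(|u₀|²·ln|u₀|² − |u₀|²)] dx and E^ε(u₀) = ∫_Ω [|∇u₀|² + λ F_ε(|u₀|²)] dx with F_ε(ρ) = ρ·ln((ε+√ρ)²) − ρ + 2ε√ρ − ε²·ln((1+√ρ/ε)²). -/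
open MeasureTheory

noncomputable def Feps (ε ρ : ℝ) : ℝ :=
  ρ * Real.log ((ε + Real.sqrt ρ)^2) - ρ + 2 * ε * Real.sqrt ρ
    - ε^2 * Real.log ((1 + Real.sqrt ρ / ε)^2)

/-!
With `a = |u₀|`, the integrands differ by `λ (F_ε(a²) - (a² ln a² - a²))`, and for `a > 0`
`F_ε(a²) - (a² ln a² - a²) = 2 (a² ln (1 + ε/a) + ε a - ε² ln (1 + a/ε))`.
Both logarithmic terms have the form `x² ln (1 + y/x)`, which lies in `[0, x y]` by
`ln (1 + t) ≤ t`; hence the difference lies in `[0, 4 ε a]`, and integrating gives the claim.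
-/

lemma sq_mul_log_one_add_div_mem_Icc {x y : ℝ} (hx : 0 < x) (hy : 0 ≤ y) :
    x ^ 2 * Real.log (1 + y / x) ∈ Set.Icc 0 (x * y) := by
  have hyx : 0 ≤ y / x := div_nonneg hy hx.le
  refine ⟨mul_nonneg (sq_nonneg x) (Real.log_nonneg (by linarith)), ?_⟩
  calc x ^ 2 * Real.log (1 + y / x)
      ≤ x ^ 2 * (y / x) := by
        gcongr
        linarith [Real.log_le_sub_one_of_pos (show 0 < 1 + y / x by positivity)]
    _ = x * y := by field_simp

lemma Feps_sq_sub {ε a : ℝ} (hε : 0 < ε) (ha : 0 < a) :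
    Feps ε (a ^ 2) - (a ^ 2 * Real.log (a ^ 2) - a ^ 2) =
      2 * (a ^ 2 * Real.log (1 + ε / a) + ε * a - ε ^ 2 * Real.log (1 + a / ε)) := by
  have hsplit : Real.log (ε + a) = Real.log a + Real.log (1 + ε / a) := by
    rw [← Real.log_mul ha.ne' (by positivity)]
    congr 1
    field_simp
    ring
  simp only [Feps, Real.sqrt_sq ha.le, Real.log_pow, hsplit]
  push_cast
  ring

lemma abs_Feps_sq_sub_le {ε a : ℝ} (hε : 0 < ε) (ha : 0 ≤ a) :
    |Feps ε (a ^ 2) - (a ^ 2 * Real.log (a ^ 2) - a ^ 2)| ≤ 4 * ε * a := by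
  rcases ha.eq_or_lt with rfl | ha
  · simp [Feps]
  obtain ⟨hA₀, hA₁⟩ := sq_mul_log_one_add_div_mem_Icc ha hε.le
  obtain ⟨hB₀, hB₁⟩ := sq_mul_log_one_add_div_mem_Icc hε ha.le
  rw [Feps_sq_sub hε ha, abs_le]
  constructor <;> nlinarith

lemma abs_integral_sub_le_integral {α : Type*} [MeasurableSpace α] {μ : Measure α}
    {f g h : α → ℝ} (hf : Integrable f μ) (hg : Integrable g μ) (hh : Integrable h μ)
    (hfg : ∀ x, |f x - g x| ≤ h x) :
    |∫ x, f x ∂μ - ∫ x, g x ∂μ| ≤ ∫ x, h x ∂μ := by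
  rw [← integral_sub hf hg]
  exact abs_integral_le_integral_abs.trans (integral_mono (hf.sub hg).abs hh hfg)

theorem stmt_6_general (d : ℕ) (Ω : Set (EuclideanSpace ℝ (Fin d)))
    (lam ε : ℝ) (hε : 0 < ε)
    (u₀ : EuclideanSpace ℝ (Fin d) → ℂ)
    (hL1 : Integrable (fun x => ‖u₀ x‖) (volume.restrict Ω))
    (hE : Integrable (fun x => ‖fderiv ℝ u₀ x‖^2 +
      lam * ((‖u₀ x‖)^2 * Real.log ((‖u₀ x‖)^2)
        - (‖u₀ x‖)^2)) (volume.restrict Ω))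
    (hEε : Integrable (fun x => ‖fderiv ℝ u₀ x‖^2 +
      lam * Feps ε ((‖u₀ x‖)^2)) (volume.restrict Ω)) :
    |(∫ x in Ω, (‖fderiv ℝ u₀ x‖^2 + lam * Feps ε ((‖u₀ x‖)^2)))
      - (∫ x in Ω, (‖fderiv ℝ u₀ x‖^2 +
          lam * ((‖u₀ x‖)^2 * Real.log ((‖u₀ x‖)^2)
            - (‖u₀ x‖)^2)))| ≤
      4 * ε * |lam| * ∫ x in Ω, ‖u₀ x‖ := by
  rw [← integral_const_mul]
  refine abs_integral_sub_le_integral hEε hE (hL1.const_mul _) fun x => ?_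
  calc _ = |lam| * |Feps ε (‖u₀ x‖ ^ 2) - (‖u₀ x‖ ^ 2 * Real.log (‖u₀ x‖ ^ 2) - ‖u₀ x‖ ^ 2)| := by
        rw [← abs_mul]
        congr 1
        ring
    _ ≤ |lam| * (4 * ε * ‖u₀ x‖) := by
        gcongr
        exact abs_Feps_sq_sub_le hε (norm_nonneg _)
    _ = 4 * ε * |lam| * ‖u₀ x‖ := by ring

theorem stmt_6 (d : ℕ) (Ω : Set (EuclideanSpace ℝ (Fin d)))
    (hΩ : volume Ω < ⊤) (lam ε : ℝ) (hε : 0 < ε)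
    (u₀ : EuclideanSpace ℝ (Fin d) → ℂ)
    (hL1 : Integrable (fun x => ‖u₀ x‖) (volume.restrict Ω))
    (hL2 : Integrable (fun x => (‖u₀ x‖)^2) (volume.restrict Ω))
    (hE : Integrable (fun x => ‖fderiv ℝ u₀ x‖^2 +
      lam * ((‖u₀ x‖)^2 * Real.log ((‖u₀ x‖)^2)
        - (‖u₀ x‖)^2)) (volume.restrict Ω))
    (hEε : Integrable (fun x => ‖fderiv ℝ u₀ x‖^2 +
      lam * Feps ε ((‖u₀ x‖)^2)) (volume.restrict Ω)) :
    |(∫ x in Ω, (‖fderiv ℝ u₀ x‖^2 + lam * Feps ε ((‖u₀ x‖)^2)))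
      - (∫ x in Ω, (‖fderiv ℝ u₀ x‖^2 +
          lam * ((‖u₀ x‖)^2 * Real.log ((‖u₀ x‖)^2)
            - (‖u₀ x‖)^2)))| ≤
      4 * ε * |lam| * ∫ x in Ω, ‖u₀ x‖ :=
  stmt_6_general d Ω lam ε hε u₀ hL1 hE hEε
end

section
/- For every ε > 0 and every a, b ∈ ℂ, one has |a·ln((ε+|a|)²) − b·ln((ε+|b|)²)| ≤ 2(1 + max{ln(1/ε), |ln(ε + max{|a|,|b|})|})·|a − b|, provided ε + max{|a|, |b|} ≥ ε. -/
/-!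
Write `z ln((ε+|z|)²) = 2 ln(ε+|z|) z` and, for `|a| ≤ |b|`, split
`a ln(ε+|a|)² - b ln(ε+|b|)² = ln(ε+|b|)² (a - b) - 2 (ln(ε+|b|) - ln(ε+|a|)) a`.
The first term is bounded by `2 |ln(ε+|b|)| |a - b|`. For the second, `ln(1 + x) ≤ x` gives
`ln(ε+|b|) - ln(ε+|a|) ≤ (|b| - |a|) / (ε+|a|)`, and `|a| / (ε+|a|) ≤ 1`, so it is at most
`2 (|b| - |a|) ≤ 2 |a - b|`.
-/

open Real

lemma mul_log_add_sub_log_add_le {ε x y : ℝ} (hε : 0 < ε) (hx : 0 ≤ x) (hxy : x ≤ y) :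
    x * (log (ε + y) - log (ε + x)) ≤ y - x := by
  have hεx : 0 < ε + x := by linarith
  have hlog : log (ε + y) - log (ε + x) ≤ (y - x) / (ε + x) := by
    have h := log_le_sub_one_of_pos (div_pos (by linarith : 0 < ε + y) hεx)
    rw [log_div (by linarith) hεx.ne'] at h
    calc log (ε + y) - log (ε + x) ≤ (ε + y) / (ε + x) - 1 := h
      _ = (y - x) / (ε + x) := by field_simp; ring
  calc x * (log (ε + y) - log (ε + x)) ≤ x * ((y - x) / (ε + x)) :=
        mul_le_mul_of_nonneg_left hlog hx
    _ = x / (ε + x) * (y - x) := by ring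
    _ ≤ 1 * (y - x) :=
        mul_le_mul_of_nonneg_right (div_le_one_of_le₀ (by linarith) hεx.le) (by linarith)
    _ = y - x := one_mul _

section NormedSpace

variable {E : Type*} [SeminormedAddCommGroup E] [NormedSpace ℝ E] {ε : ℝ}

lemma norm_log_sq_smul_sub_le_of_norm_le (hε : 0 < ε) {a b : E} (hab : ‖a‖ ≤ ‖b‖) :
    ‖log ((ε + ‖a‖) ^ 2) • a - log ((ε + ‖b‖) ^ 2) • b‖ ≤
      2 * (1 + |log (ε + ‖b‖)|) * ‖a - b‖ := by
  have hsq (t : ℝ) : log ((ε + t) ^ 2) = 2 * log (ε + t) := by rw [log_pow]; norm_num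
  have hmono : log (ε + ‖a‖) ≤ log (ε + ‖b‖) :=
    log_le_log (by positivity) (by linarith)
  have hdiff := mul_log_add_sub_log_add_le hε (norm_nonneg a) hab
  have hnorms : ‖b‖ - ‖a‖ ≤ ‖a - b‖ := by rw [norm_sub_rev]; exact norm_sub_norm_le b a
  rw [hsq, hsq]
  calc ‖(2 * log (ε + ‖a‖)) • a - (2 * log (ε + ‖b‖)) • b‖
      = ‖(2 * log (ε + ‖b‖)) • (a - b) - (2 * (log (ε + ‖b‖) - log (ε + ‖a‖))) • a‖ := by
        congr 1; module
    _ ≤ ‖(2 * log (ε + ‖b‖)) • (a - b)‖ + ‖(2 * (log (ε + ‖b‖) - log (ε + ‖a‖))) • a‖ :=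
        norm_sub_le _ _
    _ = 2 * |log (ε + ‖b‖)| * ‖a - b‖ + 2 * (‖a‖ * (log (ε + ‖b‖) - log (ε + ‖a‖))) := by
        rw [norm_smul, norm_smul, Real.norm_eq_abs, Real.norm_eq_abs, abs_mul, abs_mul, abs_two,
          abs_of_nonneg (sub_nonneg.2 hmono)]
        ring
    _ ≤ 2 * (1 + |log (ε + ‖b‖)|) * ‖a - b‖ := by linarith

lemma norm_log_sq_smul_sub_le (hε : 0 < ε) (a b : E) :
    ‖log ((ε + ‖a‖) ^ 2) • a - log ((ε + ‖b‖) ^ 2) • b‖ ≤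
      2 * (1 + |log (ε + max ‖a‖ ‖b‖)|) * ‖a - b‖ := by
  rcases le_total ‖a‖ ‖b‖ with hab | hba
  · rw [max_eq_right hab]
    exact norm_log_sq_smul_sub_le_of_norm_le hε hab
  · rw [max_eq_left hba, norm_sub_rev, norm_sub_rev a]
    exact norm_log_sq_smul_sub_le_of_norm_le hε hba

end NormedSpace

theorem stmt_11_general (ε : ℝ) (hε : 0 < ε) (a b : ℂ) :
    ‖a * (Real.log ((ε + ‖a‖)^2) : ℂ)
        - b * (Real.log ((ε + ‖b‖)^2) : ℂ)‖ ≤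
      2 * (1 + max (Real.log (1/ε))
            |Real.log (ε + max ‖a‖ ‖b‖)|)
        * ‖a - b‖ := by
  simp_rw [mul_comm a, mul_comm b, ← Complex.real_smul]
  calc _ ≤ 2 * (1 + |log (ε + max ‖a‖ ‖b‖)|) * ‖a - b‖ := norm_log_sq_smul_sub_le hε a b
    _ ≤ _ := by gcongr; exact le_max_right _ _

theorem stmt_11 (ε : ℝ) (hε : 0 < ε) (a b : ℂ)
    (h : ε + max ‖a‖ ‖b‖ ≥ ε) :
    ‖a * (Real.log ((ε + ‖a‖)^2) : ℂ)
        - b * (Real.log ((ε + ‖b‖)^2) : ℂ)‖ ≤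
      2 * (1 + max (Real.log (1/ε))
            |Real.log (ε + max ‖a‖ ‖b‖)|)
        * ‖a - b‖ :=
  stmt_11_general ε hε a b
end

section
/- For every ε > 0 and all nonzero complex numbers u, v, one has |u²/(|u|(ε+|u|)) − v²/(|v|(ε+|v|))| ≤ 4|u−v|/ε. -/
/-!
Write `x / (c + ‖x‖)` for `(c + ‖x‖)⁻¹ • x`. Then `u² / (‖u‖ (ε + ‖u‖))` is the product of
`u / ‖u‖` and `u / (ε + ‖u‖)`, both of norm at most `1`. For `c ≥ 0` the map `x ↦ x / (c + ‖x‖)`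
satisfies `(c + ‖y‖) ‖x / (c + ‖x‖) - y / (c + ‖y‖)‖ ≤ 2 ‖x - y‖`, so the product rule
`ab - cd = a (b - d) + (a - c) d` bounds the difference by `4 ‖u - v‖ / (ε + ‖v‖)`.
-/

section DivAddNorm

variable {E : Type*} [NormedAddCommGroup E] [NormedSpace ℝ E] {c : ℝ}

/-- For `c = 0` this is `NormedSpace.normalize`. -/
noncomputable def divAddNorm (c : ℝ) (x : E) : E := (c + ‖x‖)⁻¹ • x

theorem add_norm_smul_divAddNorm (hc : 0 ≤ c) (x : E) : (c + ‖x‖) • divAddNorm c x = x := by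
  rcases eq_or_ne (c + ‖x‖) 0 with h | h
  · have hx : x = 0 := norm_eq_zero.mp (by linarith [norm_nonneg x])
    simp [hx, divAddNorm]
  · rw [divAddNorm, smul_inv_smul₀ h]

theorem norm_divAddNorm_le_one (hc : 0 ≤ c) (x : E) : ‖divAddNorm c x‖ ≤ 1 := by
  rw [divAddNorm, norm_smul, norm_inv, Real.norm_of_nonneg (by positivity)]
  exact inv_mul_le_one_of_le₀ (by linarith) (by positivity)

theorem add_norm_mul_norm_divAddNorm_sub_le (hc : 0 ≤ c) (x y : E) :
    (c + ‖y‖) * ‖divAddNorm c x - divAddNorm c y‖ ≤ 2 * ‖x - y‖ := by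
  have key : (c + ‖y‖) • (divAddNorm c x - divAddNorm c y)
      = (x - y) + (‖y‖ - ‖x‖) • divAddNorm c x := by
    linear_combination (norm := module)
      add_norm_smul_divAddNorm hc x - add_norm_smul_divAddNorm hc y
  have hnorm : |‖y‖ - ‖x‖| ≤ ‖x - y‖ := by
    rw [norm_sub_rev]; exact abs_norm_sub_norm_le y x
  calc (c + ‖y‖) * ‖divAddNorm c x - divAddNorm c y‖
      = ‖(x - y) + (‖y‖ - ‖x‖) • divAddNorm c x‖ := by
        rw [← key, norm_smul, Real.norm_of_nonneg (by positivity)]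
    _ ≤ ‖x - y‖ + |‖y‖ - ‖x‖| * ‖divAddNorm c x‖ := by
        rw [← Real.norm_eq_abs, ← norm_smul]; exact norm_add_le _ _
    _ ≤ ‖x - y‖ + ‖x - y‖ * 1 := by
        gcongr; exact norm_divAddNorm_le_one hc x
    _ = 2 * ‖x - y‖ := by ring

end DivAddNorm

theorem norm_mul_sub_mul_le {R : Type*} [NonUnitalSeminormedRing R] (a b c d : R) :
    ‖a * b - c * d‖ ≤ ‖a‖ * ‖b - d‖ + ‖a - c‖ * ‖d‖ := by
  calc ‖a * b - c * d‖ = ‖a * (b - d) + (a - c) * d‖ := by noncomm_ring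
    _ ≤ ‖a‖ * ‖b - d‖ + ‖a - c‖ * ‖d‖ :=
      (norm_add_le _ _).trans (add_le_add (norm_mul_le _ _) (norm_mul_le _ _))

theorem sq_div_norm_mul_add_norm_eq (ε : ℝ) (u : ℂ) :
    u ^ 2 / ((‖u‖ : ℂ) * ((ε : ℂ) + (‖u‖ : ℂ))) = divAddNorm 0 u * divAddNorm ε u := by
  simp only [divAddNorm, zero_add, Complex.real_smul, Complex.ofReal_inv, Complex.ofReal_add]
  rw [div_eq_mul_inv, mul_inv]
  ring

theorem stmt_13_general (ε : ℝ) (hε : 0 < ε) (u v : ℂ) :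
    ‖u^2 / ((‖u‖ : ℂ) * ((ε : ℂ) + (‖u‖ : ℂ)))
        - v^2 / ((‖v‖ : ℂ) * ((ε : ℂ) + (‖v‖ : ℂ)))‖ ≤
      4 * ‖u - v‖ / ε := by
  have hεv : 0 < ε + ‖v‖ := by positivity
  have hnorm_v : ‖divAddNorm ε v‖ = ‖v‖ / (ε + ‖v‖) := by
    rw [divAddNorm, norm_smul, norm_inv, Real.norm_of_nonneg hεv.le, inv_mul_eq_div]
  have hshrink : ‖divAddNorm ε u - divAddNorm ε v‖ ≤ 2 * ‖u - v‖ / (ε + ‖v‖) := by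
    rw [le_div_iff₀ hεv, mul_comm]
    exact add_norm_mul_norm_divAddNorm_sub_le hε.le u v
  have hsign :
      ‖divAddNorm 0 u - divAddNorm 0 v‖ * ‖divAddNorm ε v‖ ≤ 2 * ‖u - v‖ / (ε + ‖v‖) := by
    rw [hnorm_v, mul_div_assoc', mul_comm]
    exact div_le_div_of_nonneg_right
      (by simpa using add_norm_mul_norm_divAddNorm_sub_le le_rfl u v) hεv.le
  rw [sq_div_norm_mul_add_norm_eq, sq_div_norm_mul_add_norm_eq]
  calc _ ≤ ‖divAddNorm 0 u‖ * ‖divAddNorm ε u - divAddNorm ε v‖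
          + ‖divAddNorm 0 u - divAddNorm 0 v‖ * ‖divAddNorm ε v‖ := norm_mul_sub_mul_le _ _ _ _
    _ ≤ 1 * (2 * ‖u - v‖ / (ε + ‖v‖)) + 2 * ‖u - v‖ / (ε + ‖v‖) := by
        gcongr
        exact norm_divAddNorm_le_one le_rfl u
    _ = 4 * ‖u - v‖ / (ε + ‖v‖) := by ring
    _ ≤ 4 * ‖u - v‖ / ε := by gcongr; linarith [norm_nonneg v]

theorem stmt_13 (ε : ℝ) (hε : 0 < ε) (u v : ℂ) (hu : u ≠ 0) (hv : v ≠ 0) :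
    ‖u^2 / ((‖u‖ : ℂ) * ((ε : ℂ) + (‖u‖ : ℂ)))
        - v^2 / ((‖v‖ : ℂ) * ((ε : ℂ) + (‖v‖ : ℂ)))‖ ≤
      4 * ‖u - v‖ / ε :=
  stmt_13_general ε hε u v
end
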